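/- Let w ∈ ℝ^n, p > 0, Ω = {x ∈ ℝ^n : ‖x − w‖ ≤ p}, and φ(x) = −√(p² − ‖x − w‖²) on the interior of Ω. Then φ is convex on Ω, and for every y ∈ ℝ^n the minimizer of x ↦ −⟨x, y⟩ + φ(x) over Ω is x*(y) = p·y / √(1 + ‖y‖²) + w. -/

import Mathlib

open RealInnerProductSpace

/-!
`√(p ^ 2 - ‖x - w‖ ^ 2)` is a concave monotone function of a concave one, hence concave.
With `u = x - w`, the vector `(u, √(p ^ 2 - ‖u‖ ^ 2))` has norm `p`, so Cauchy–Schwarz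
against `(y, 1)` gives `⟪u, y⟫ + √(p ^ 2 - ‖u‖ ^ 2) ≤ p √(1 + ‖y‖ ^ 2)`,
with equality at `u = p y / √(1 + ‖y‖ ^ 2)`.
-/

theorem ConcaveOn.sqrt {E : Type*} [AddCommMonoid E] [Module ℝ E] {s : Set E} {f : E → ℝ}
    (hf : ConcaveOn ℝ s f) (hf₀ : ∀ x ∈ s, 0 ≤ f x) : ConcaveOn ℝ s fun x => √(f x) := by
  refine ⟨hf.1, fun x hx z hz a b ha hb hab => ?_⟩
  calc a • √(f x) + b • √(f z) ≤ √(a • f x + b • f z) :=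
        Real.strictConcaveOn_sqrt.concaveOn.2 (hf₀ x hx) (hf₀ z hz) ha hb hab
    _ ≤ √(f (a • x + b • z)) := Real.sqrt_le_sqrt (hf.2 hx hz ha hb hab)

theorem mul_add_le_sqrt_sq_add_sq_mul_sqrt_one_add_sq (a c t : ℝ) :
    a * t + c ≤ √(a ^ 2 + c ^ 2) * √(1 + t ^ 2) := by
  rw [← Real.sqrt_mul (by positivity)]
  refine (le_abs_self _).trans (Real.abs_le_sqrt ?_)
  nlinarith [sq_nonneg (a - c * t)]

variable {E : Type*} [NormedAddCommGroup E] [InnerProductSpace ℝ E]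

theorem concaveOn_sqrt_sq_sub_norm_sub_sq (w : E) (p : ℝ) :
    ConcaveOn ℝ (Metric.closedBall w p) fun x => √(p ^ 2 - ‖x - w‖ ^ 2) := by
  have hconvex : ConvexOn ℝ (Metric.closedBall w p) fun x => ‖x - w‖ ^ 2 := by
    have := (convexOn_dist w (convex_closedBall w p)).pow (fun _ _ => dist_nonneg) 2
    simp only [dist_eq_norm] at this
    exact this
  refine ((concaveOn_const _ (convex_closedBall w p)).sub hconvex).sqrt fun x hx => ?_
  rw [Metric.mem_closedBall, dist_eq_norm] at hx
  show 0 ≤ p ^ 2 - ‖x - w‖ ^ 2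
  nlinarith [norm_nonneg (x - w)]

theorem inner_add_sqrt_sq_sub_norm_sq_le {u : E} {p : ℝ} (hu : ‖u‖ ≤ p) (y : E) :
    ⟪u, y⟫ + √(p ^ 2 - ‖u‖ ^ 2) ≤ p * √(1 + ‖y‖ ^ 2) := by
  have hp : 0 ≤ p := (norm_nonneg u).trans hu
  calc ⟪u, y⟫ + √(p ^ 2 - ‖u‖ ^ 2) ≤ ‖u‖ * ‖y‖ + √(p ^ 2 - ‖u‖ ^ 2) := by
        gcongr; exact real_inner_le_norm u y
    _ ≤ √(‖u‖ ^ 2 + √(p ^ 2 - ‖u‖ ^ 2) ^ 2) * √(1 + ‖y‖ ^ 2) :=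
        mul_add_le_sqrt_sq_add_sq_mul_sqrt_one_add_sq _ _ _
    _ = p * √(1 + ‖y‖ ^ 2) := by
        rw [Real.sq_sqrt (by nlinarith [norm_nonneg u]), add_sub_cancel, Real.sqrt_sq hp]

theorem neg_inner_add_neg_sqrt_at_ball_minimizer (w y : E) {p : ℝ} (hp : 0 ≤ p) :
    -⟪(p / √(1 + ‖y‖ ^ 2)) • y + w, y⟫ + -√(p ^ 2 - ‖(p / √(1 + ‖y‖ ^ 2)) • y + w - w‖ ^ 2)
      = -⟪w, y⟫ - p * √(1 + ‖y‖ ^ 2) := by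
  set s := √(1 + ‖y‖ ^ 2)
  have hs : 0 < s := Real.sqrt_pos.mpr (by positivity)
  have hs2 : s ^ 2 = 1 + ‖y‖ ^ 2 := Real.sq_sqrt (by positivity)
  have hdist : p ^ 2 - ‖(p / s) • y + w - w‖ ^ 2 = (p / s) ^ 2 := by
    rw [add_sub_cancel_right, norm_smul, Real.norm_of_nonneg (by positivity)]
    field_simp
    linear_combination p ^ 2 * hs2
  rw [hdist, Real.sqrt_sq (by positivity), inner_add_left, real_inner_smul_left,
    real_inner_self_eq_norm_sq]
  field_simp
  linear_combination p * hs2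

theorem ball_generating_function_general
    {n : ℕ} (w : EuclideanSpace ℝ (Fin n)) (p : ℝ) :
    ConvexOn ℝ {x : EuclideanSpace ℝ (Fin n) | ‖x - w‖ ≤ p}
      (fun x => -Real.sqrt (p ^ 2 - ‖x - w‖ ^ 2)) ∧
    ∀ y : EuclideanSpace ℝ (Fin n),
      IsMinOn
        (fun x => -⟪x, y⟫ + -Real.sqrt (p ^ 2 - ‖x - w‖ ^ 2))
        {x : EuclideanSpace ℝ (Fin n) | ‖x - w‖ ≤ p}
        ((p / Real.sqrt (1 + ‖y‖ ^ 2)) • y + w) := by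
  have hball : {x : EuclideanSpace ℝ (Fin n) | ‖x - w‖ ≤ p} = Metric.closedBall w p := by
    ext x; rw [Metric.mem_closedBall, dist_eq_norm]; rfl
  refine ⟨hball ▸ (concaveOn_sqrt_sq_sub_norm_sub_sq w p).neg, fun y x (hx : ‖x - w‖ ≤ p) => ?_⟩
  have hinner : ⟪x, y⟫ = ⟪x - w, y⟫ + ⟪w, y⟫ := by rw [inner_sub_left]; ring
  have hbound := inner_add_sqrt_sq_sub_norm_sq_le hx y
  calc _ = -⟪w, y⟫ - p * √(1 + ‖y‖ ^ 2) :=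
        neg_inner_add_neg_sqrt_at_ball_minimizer w y ((norm_nonneg _).trans hx)
    _ ≤ -⟪x, y⟫ + -√(p ^ 2 - ‖x - w‖ ^ 2) := by linarith

/-- Spherical generating function for a Euclidean ball: convexity and the
closed-form conjugate-gradient (minimizer) map. -/
theorem ball_generating_function
    {n : ℕ} (w : EuclideanSpace ℝ (Fin n)) (p : ℝ) (hp : 0 < p) :
    ConvexOn ℝ {x : EuclideanSpace ℝ (Fin n) | ‖x - w‖ ≤ p}
      (fun x => -Real.sqrt (p ^ 2 - ‖x - w‖ ^ 2)) ∧
    ∀ y : EuclideanSpace ℝ (Fin n),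
      IsMinOn
        (fun x => -⟪x, y⟫ + -Real.sqrt (p ^ 2 - ‖x - w‖ ^ 2))
        {x : EuclideanSpace ℝ (Fin n) | ‖x - w‖ ≤ p}
        ((p / Real.sqrt (1 + ‖y‖ ^ 2)) • y + w) :=
  ball_generating_function_general w p
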